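/- The variety of SMMV-algebras has the congruence extension property: if (A, τ) is a subalgebra of (B, τ) and θ is a congruence on (A, τ), then θ extends to a congruence on (B, τ) whose restriction to A is θ. -/

import Mathlib

/-- An MV-algebra `(A, ⊕, ¬, 0)`. -/
class MV (A : Type*) extends Zero A where
  oplus : A → A → A
  mvneg : A → A
  oplus_assoc : ∀ x y z : A, oplus (oplus x y) z = oplus x (oplus y z)
  oplus_comm : ∀ x y : A, oplus x y = oplus y x
  oplus_zero : ∀ x : A, oplus x 0 = x
  mvneg_mvneg : ∀ x : A, mvneg (mvneg x) = x
  oplus_top : ∀ x : A, oplus x (mvneg 0) = mvneg 0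
  luk : ∀ x y : A, oplus (mvneg (oplus (mvneg x) y)) y = oplus (mvneg (oplus (mvneg y) x)) x

namespace MV

variable {A : Type*} [MV A]

/-- The top element `1 = ¬0`. -/
def top : A := mvneg 0
/-- `x → y := ¬x ⊕ y`. -/
def imp (x y : A) : A := oplus (mvneg x) y
/-- `x ⊙ y := ¬(¬x ⊕ ¬y)`. -/
def odot (x y : A) : A := mvneg (oplus (mvneg x) (mvneg y))
/-- `x ⊖ y := ¬(¬x ⊕ y)`. -/
def ominus (x y : A) : A := mvneg (oplus (mvneg x) y)
/-- Lattice join `x ∨ y := (x → y) → y`. -/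
def mvsup (x y : A) : A := imp (imp x y) y
/-- Lattice meet `x ∧ y := x ⊙ (x → y)`. -/
def mvinf (x y : A) : A := odot x (imp x y)
/-- The lattice order: `x ≤ y` iff `x → y = 1`. -/
def mvle (x y : A) : Prop := imp x y = top
/-- Strict order. -/
def mvlt (x y : A) : Prop := mvle x y ∧ x ≠ y

/-- `(A, τ)` is an SMV-algebra. -/
structure IsSMV (τ : A → A) : Prop where
  map_top : τ top = top
  tau_oplus : ∀ x y : A, τ (oplus x y) = oplus (τ x) (τ (ominus y (odot x y)))
  map_neg : ∀ x : A, τ (mvneg x) = mvneg (τ x)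
  tau_fix : ∀ x y : A, τ (oplus (τ x) (τ y)) = oplus (τ x) (τ y)

/-- `(A, τ)` is a state morphism MV-algebra. -/
def IsSMMV (τ : A → A) : Prop := IsSMV τ ∧ ∀ x y : A, τ (oplus x y) = oplus (τ x) (τ y)

/-- An MV-filter. -/
structure IsFilter (F : Set A) : Prop where
  top_mem : top ∈ F
  mp : ∀ a b : A, a ∈ F → imp a b ∈ F → b ∈ F

/-- A `τ`-filter: an MV-filter closed under `τ`. -/
def IsTauFilter (τ : A → A) (F : Set A) : Prop := IsFilter F ∧ ∀ a ∈ F, τ a ∈ F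

/-- Subdirect irreducibility of an SMV-algebra: there is a minimum nontrivial `τ`-filter. -/
def SubdirIrrSMV (τ : A → A) : Prop :=
  ∃ F : Set A, IsTauFilter τ F ∧ F ≠ {top} ∧
    ∀ G : Set A, IsTauFilter τ G → G ≠ {top} → F ⊆ G

/-- A filter of the subalgebra/subhoop with universe `S`. -/
def IsFilterOn (S F : Set A) : Prop :=
  F ⊆ S ∧ top ∈ F ∧ ∀ a b : A, a ∈ F → b ∈ S → imp a b ∈ F → b ∈ F

/-- Subdirect irreducibility of the subalgebra/subhoop with universe `S`:
there is a minimum nontrivial filter on `S`. -/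
def SubdirIrrOn (S : Set A) : Prop :=
  ∃ F : Set A, IsFilterOn S F ∧ F ≠ {top} ∧
    ∀ G : Set A, IsFilterOn S G → G ≠ {top} → F ⊆ G

/-- The set `F_τ(A) = {a : τ a = 1}`. -/
def tauKernel (τ : A → A) : Set A := {a : A | τ a = top}

/-- Homomorphisms of MV-algebras. -/
structure IsMVHom {A B : Type*} [MV A] [MV B] (f : A → B) : Prop where
  map_oplus : ∀ x y : A, f (oplus x y) = oplus (f x) (f y)
  map_neg : ∀ x : A, f (mvneg x) = mvneg (f x)
  map_zero : f 0 = 0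

end MV

open MV

instance MV.instProd {A B : Type*} [MV A] [MV B] : MV (A × B) where
  oplus x y := (oplus x.1 y.1, oplus x.2 y.2)
  mvneg x := (mvneg x.1, mvneg x.2)
  oplus_assoc x y z := by simp [oplus_assoc]
  oplus_comm x y := by simp [oplus_comm x.1 y.1, oplus_comm x.2 y.2]
  oplus_zero x := by simp [oplus_zero]
  mvneg_mvneg x := by simp [mvneg_mvneg]
  oplus_top x := by simp [oplus_top]
  luk x y := by simp [luk]

instance MV.instPi {I : Type*} {A : I → Type*} [∀ i, MV (A i)] : MV (∀ i, A i) where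
  oplus x y i := oplus (x i) (y i)
  mvneg x i := mvneg (x i)
  oplus_assoc x y z := by funext i; simp [oplus_assoc]
  oplus_comm x y := by funext i; exact oplus_comm _ _
  oplus_zero x := by funext i; exact oplus_zero _
  mvneg_mvneg x := by funext i; exact mvneg_mvneg _
  oplus_top x := by funext i; exact oplus_top _
  luk x y := by funext i; exact luk _ _

/-- A congruence of an SMMV-algebra `(A, τ)`. -/
structure IsSMMVCong {A : Type*} [MV A] (τ : A → A) (θ : A → A → Prop) : Prop where
  refl : ∀ a : A, θ a a
  symm : ∀ a b : A, θ a b → θ b a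
  trans : ∀ a b c : A, θ a b → θ b c → θ a c
  oplus_compat : ∀ a b c d : A, θ a b → θ c d → θ (oplus a c) (oplus b d)
  neg_compat : ∀ a b : A, θ a b → θ (mvneg a) (mvneg b)
  tau_compat : ∀ a b : A, θ a b → θ (τ a) (τ b)

/-!
Congruences of an SMMV-algebra `(A, τ)` are the same as its `τ`-filters: a congruence `θ`
gives the filter `1/θ = {a | θ a 1}`, and a filter `F` gives the relation `d(a, b) ∈ F`, where
`d(a, b) = (a → b) ⊙ (b → a)`. To extend `θ` from `A` to `B`, take the upward closure in `B`
of the `τ`-filter `1/θ`. It is again a filter, and it is closed under `τ_B` because `τ_B`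
is a monotone MV-endomorphism that agrees with `τ_A` on `A`. Its trace on `A` is `1/θ`,
since the embedding reflects the order and filters are upward closed.
-/

namespace MV

variable {A : Type*} [MV A]

instance : Std.Associative (oplus (A := A)) := ⟨oplus_assoc⟩
instance : Std.Commutative (oplus (A := A)) := ⟨oplus_comm⟩

lemma zero_oplus (x : A) : oplus 0 x = x := by rw [oplus_comm, oplus_zero]

lemma mvneg_top : mvneg (top : A) = 0 := mvneg_mvneg 0

lemma oplus_top_right (x : A) : oplus x (top : A) = top := oplus_top x

lemma top_imp (x : A) : imp top x = x := by
  rw [imp, mvneg_top, zero_oplus]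

lemma mvneg_oplus_self (x : A) : oplus (mvneg x) x = top := by
  have h := luk (top : A) x
  rwa [mvneg_top, zero_oplus, oplus_top_right] at h

lemma imp_self (x : A) : imp x x = top := mvneg_oplus_self x

lemma mvle_refl (x : A) : mvle x x := imp_self x

lemma eq_top_of_top_mvle {x : A} (h : mvle top x) : x = top := by
  rwa [mvle, top_imp] at h

lemma odot_top (x : A) : odot x (top : A) = x := by
  rw [odot, mvneg_top, oplus_zero, mvneg_mvneg]

lemma odot_comm (x y : A) : odot x y = odot y x := by
  rw [odot, odot, oplus_comm]

lemma odot_assoc (x y z : A) : odot (odot x y) z = odot x (odot y z) := by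
  rw [odot, odot, odot, odot, mvneg_mvneg, mvneg_mvneg, oplus_assoc]

instance : Std.Associative (odot (A := A)) := ⟨odot_assoc⟩
instance : Std.Commutative (odot (A := A)) := ⟨odot_comm⟩

lemma ominus_oplus_of_mvle {a b : A} (h : mvle a b) : oplus (ominus b a) a = b := by
  have hl := luk a b
  rw [show oplus (mvneg a) b = top from h, mvneg_top, zero_oplus] at hl
  exact hl.symm

lemma oplus_mvle_oplus_left {a b : A} (c : A) (h : mvle a b) :
    mvle (oplus a c) (oplus b c) := by
  rw [mvle, imp, ← ominus_oplus_of_mvle h,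
    show oplus (mvneg (oplus a c)) (oplus (oplus (ominus b a) a) c)
      = oplus (ominus b a) (oplus (mvneg (oplus a c)) (oplus a c)) by ac_rfl,
    mvneg_oplus_self, oplus_top_right]

lemma oplus_mvle_oplus_right {a b : A} (c : A) (h : mvle a b) :
    mvle (oplus c a) (oplus c b) := by
  rw [oplus_comm c a, oplus_comm c b]; exact oplus_mvle_oplus_left c h

lemma mvle_trans {a b c : A} (hab : mvle a b) (hbc : mvle b c) : mvle a c := by
  have h := oplus_mvle_oplus_right (mvneg a) hbc
  rw [show oplus (mvneg a) b = top from hab] at h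
  exact eq_top_of_top_mvle h

lemma mvneg_mvle_mvneg {a b : A} (h : mvle a b) : mvle (mvneg b) (mvneg a) := by
  rw [mvle, imp, mvneg_mvneg, oplus_comm]; exact h

lemma odot_mvle_odot {a b c d : A} (hab : mvle a b) (hcd : mvle c d) :
    mvle (odot a c) (odot b d) :=
  mvneg_mvle_mvneg (mvle_trans (oplus_mvle_oplus_left _ (mvneg_mvle_mvneg hab))
    (oplus_mvle_oplus_right _ (mvneg_mvle_mvneg hcd)))

lemma odot_mvle_left (x y : A) : mvle (odot x y) x := by
  rw [mvle, imp, odot, mvneg_mvneg,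
    show oplus (oplus (mvneg x) (mvneg y)) x = oplus (mvneg y) (oplus (mvneg x) x) by ac_rfl,
    mvneg_oplus_self, oplus_top_right]

lemma odot_mvle_right (x y : A) : mvle (odot x y) y := by
  rw [odot_comm]; exact odot_mvle_left y x

lemma odot_imp_mvle (a b : A) : mvle (odot (imp a b) a) b := by
  rw [mvle, imp, odot, mvneg_mvneg, oplus_assoc]
  exact mvneg_oplus_self _

lemma mvle_imp_odot (x y : A) : mvle x (imp y (odot x y)) := by
  rw [mvle, imp, imp, odot, ← oplus_assoc, oplus_comm (oplus (mvneg x) (mvneg y))]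
  exact mvneg_oplus_self _

lemma mvle_imp_of_odot_mvle {x y z : A} (h : mvle (odot x y) z) : mvle x (imp y z) :=
  mvle_trans (mvle_imp_odot x y) (oplus_mvle_oplus_right _ h)

lemma odot_oplus_mvle (x a c : A) : mvle (odot x (oplus a c)) (oplus (odot x a) c) := by
  have hneg : mvle (mvneg a) (oplus (mvneg (oplus a c)) c) := by
    rw [mvle, imp, mvneg_mvneg, oplus_comm _ c, ← oplus_assoc, oplus_comm]
    exact mvneg_oplus_self _
  have h := oplus_mvle_oplus_right (oplus (odot x a) (mvneg x)) hneg
  rw [odot, show oplus (oplus (mvneg (oplus (mvneg x) (mvneg a))) (mvneg x)) (mvneg a)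
      = oplus (mvneg (oplus (mvneg x) (mvneg a))) (oplus (mvneg x) (mvneg a)) by ac_rfl,
    mvneg_oplus_self] at h
  rw [mvle, imp, odot, odot, mvneg_mvneg, ← eq_top_of_top_mvle h]
  ac_rfl

lemma imp_odot_imp_mvle (x y z : A) : mvle (odot (imp x y) (imp y z)) (imp x z) := by
  apply mvle_imp_of_odot_mvle
  rw [show odot (odot (imp x y) (imp y z)) x = odot (imp y z) (odot (imp x y) x) by ac_rfl]
  exact mvle_trans (odot_mvle_odot (mvle_refl _) (odot_imp_mvle x y)) (odot_imp_mvle y z)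

lemma imp_odot_imp_mvle_imp_oplus (a b c d : A) :
    mvle (odot (imp a b) (imp c d)) (imp (oplus a c) (oplus b d)) := by
  apply mvle_imp_of_odot_mvle
  rw [show odot (odot (imp a b) (imp c d)) (oplus a c)
      = odot (imp c d) (odot (imp a b) (oplus a c)) by ac_rfl]
  have hab : mvle (odot (imp a b) (oplus a c)) (oplus c b) := by
    rw [oplus_comm c b]
    exact mvle_trans (odot_oplus_mvle _ _ _) (oplus_mvle_oplus_left c (odot_imp_mvle a b))
  refine mvle_trans (odot_mvle_odot (mvle_refl _) hab)
    (mvle_trans (odot_oplus_mvle _ _ _) ?_)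
  rw [oplus_comm b d]
  exact oplus_mvle_oplus_left b (odot_imp_mvle c d)

/-- `a ⊙ (a → b)` is the meet `a ∧ b`; its symmetry is the Łukasiewicz axiom `luk`. -/
lemma odot_imp_comm (a b : A) : odot a (imp a b) = odot b (imp b a) := by
  have h := luk (mvneg b) (mvneg a)
  rw [mvneg_mvneg, mvneg_mvneg, oplus_comm b (mvneg a), oplus_comm a (mvneg b)] at h
  rw [odot, odot, imp, imp, oplus_comm (mvneg a), oplus_comm (mvneg b), h]

def mvdist (a b : A) : A := odot (imp a b) (imp b a)

lemma mvdist_self (a : A) : mvdist a a = top := by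
  rw [mvdist, imp_self, odot_top]

lemma mvdist_comm (a b : A) : mvdist a b = mvdist b a := odot_comm _ _

lemma mvdist_mvneg (a b : A) : mvdist (mvneg a) (mvneg b) = mvdist a b := by
  rw [mvdist, mvdist, imp, imp, imp, imp, mvneg_mvneg, mvneg_mvneg,
    oplus_comm a (mvneg b), oplus_comm b (mvneg a), odot_comm]

lemma odot_mvdist_mvle_mvdist (a b c : A) :
    mvle (odot (mvdist a b) (mvdist b c)) (mvdist a c) := by
  rw [mvdist, mvdist, mvdist,
    show odot (odot (imp a b) (imp b a)) (odot (imp b c) (imp c b))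
      = odot (odot (imp a b) (imp b c)) (odot (imp c b) (imp b a)) by ac_rfl]
  exact odot_mvle_odot (imp_odot_imp_mvle a b c) (imp_odot_imp_mvle c b a)

lemma odot_mvdist_mvle_mvdist_oplus (a b c d : A) :
    mvle (odot (mvdist a b) (mvdist c d)) (mvdist (oplus a c) (oplus b d)) := by
  rw [mvdist, mvdist, mvdist,
    show odot (odot (imp a b) (imp b a)) (odot (imp c d) (imp d c))
      = odot (odot (imp a b) (imp c d)) (odot (imp b a) (imp d c)) by ac_rfl]
  exact odot_mvle_odot (imp_odot_imp_mvle_imp_oplus a b c d)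
    (imp_odot_imp_mvle_imp_oplus b a d c)

section Hom

variable {B : Type*} [MV B] {f : A → B}

lemma IsMVHom.map_top (hf : IsMVHom f) : f top = top := by
  rw [top, top, hf.map_neg, hf.map_zero]

lemma IsMVHom.map_imp (hf : IsMVHom f) (a b : A) : f (imp a b) = imp (f a) (f b) := by
  rw [imp, imp, hf.map_oplus, hf.map_neg]

lemma IsMVHom.map_odot (hf : IsMVHom f) (a b : A) : f (odot a b) = odot (f a) (f b) := by
  rw [odot, odot, hf.map_neg, hf.map_oplus, hf.map_neg, hf.map_neg]

lemma IsMVHom.map_mvdist (hf : IsMVHom f) (a b : A) :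
    f (mvdist a b) = mvdist (f a) (f b) := by
  rw [mvdist, mvdist, hf.map_odot, hf.map_imp, hf.map_imp]

lemma IsMVHom.mvle_map_iff (hf : IsMVHom f) (hinj : Function.Injective f) {a b : A} :
    mvle (f a) (f b) ↔ mvle a b := by
  rw [mvle, mvle, ← hf.map_imp, ← hf.map_top, hinj.eq_iff]

lemma IsMVHom.mvle_map (hf : IsMVHom f) {a b : A} (h : mvle a b) : mvle (f a) (f b) := by
  rw [mvle, ← hf.map_imp, show imp a b = top from h, hf.map_top]

end Hom

lemma IsSMMV.isMVHom {τ : A → A} (h : IsSMMV τ) : IsMVHom τ where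
  map_oplus := h.2
  map_neg := h.1.map_neg
  map_zero := by rw [← mvneg_top, h.1.map_neg, h.1.map_top, mvneg_top]

namespace IsFilter

variable {F : Set A}

lemma mem_of_mvle (hF : IsFilter F) {a b : A} (ha : a ∈ F) (hab : mvle a b) : b ∈ F :=
  hF.mp a b ha (by rw [show imp a b = top from hab]; exact hF.top_mem)

lemma odot_mem (hF : IsFilter F) {a b : A} (ha : a ∈ F) (hb : b ∈ F) : odot a b ∈ F :=
  hF.mp b _ hb (hF.mem_of_mvle ha (mvle_imp_odot a b))

end IsFilter

def congOfFilter (F : Set A) (a b : A) : Prop := mvdist a b ∈ F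

/-- The filter `1/θ` of a congruence `θ`. -/
def filterOfCong (θ : A → A → Prop) : Set A := {a | θ a top}

lemma IsTauFilter.isSMMVCong_congOfFilter {τ : A → A} {F : Set A} (hτ : IsMVHom τ)
    (hF : IsTauFilter τ F) : IsSMMVCong τ (congOfFilter F) where
  refl a := by rw [congOfFilter, mvdist_self]; exact hF.1.top_mem
  symm a b h := by rwa [congOfFilter, mvdist_comm]
  trans a b c hab hbc := hF.1.mem_of_mvle (hF.1.odot_mem hab hbc) (odot_mvdist_mvle_mvdist a b c)
  oplus_compat a b c d hab hcd :=
    hF.1.mem_of_mvle (hF.1.odot_mem hab hcd) (odot_mvdist_mvle_mvdist_oplus a b c d)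
  neg_compat a b h := by rwa [congOfFilter, mvdist_mvneg]
  tau_compat a b h := by rw [congOfFilter, ← hτ.map_mvdist]; exact hF.2 _ h

namespace IsSMMVCong

variable {τ : A → A} {θ : A → A → Prop}

lemma odot_compat (hθ : IsSMMVCong τ θ) {a b c d : A} (hab : θ a b) (hcd : θ c d) :
    θ (odot a c) (odot b d) :=
  hθ.neg_compat _ _ (hθ.oplus_compat _ _ _ _ (hθ.neg_compat _ _ hab) (hθ.neg_compat _ _ hcd))

lemma isFilter_filterOfCong (hθ : IsSMMVCong τ θ) : IsFilter (filterOfCong θ) := by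
  refine ⟨hθ.refl top, fun a b ha hab => ?_⟩
  have h := hθ.oplus_compat _ _ _ _ (hθ.neg_compat _ _ ha) (hθ.refl b)
  rw [← imp, ← imp, top_imp] at h
  exact hθ.trans _ _ _ (hθ.symm _ _ h) hab

lemma isTauFilter_filterOfCong (hθ : IsSMMVCong τ θ) (hτ : τ top = top) :
    IsTauFilter τ (filterOfCong θ) := by
  refine ⟨hθ.isFilter_filterOfCong, fun a ha => ?_⟩
  have h := hθ.tau_compat _ _ ha
  rwa [hτ] at h

lemma imp_mem_filterOfCong (hθ : IsSMMVCong τ θ) {a b : A} (h : θ a b) :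
    imp a b ∈ filterOfCong θ := by
  have h' := hθ.oplus_compat _ _ _ _ (hθ.neg_compat _ _ h) (hθ.refl b)
  rwa [← imp, ← imp, imp_self] at h'

lemma of_imp_mem_filterOfCong (hθ : IsSMMVCong τ θ) {a b : A}
    (hab : imp a b ∈ filterOfCong θ) (hba : imp b a ∈ filterOfCong θ) : θ a b := by
  have ha := hθ.odot_compat (hθ.refl a) hab
  have hb := hθ.odot_compat (hθ.refl b) hba
  rw [odot_top] at ha
  rw [odot_top, ← odot_imp_comm] at hb
  exact hθ.trans _ _ _ (hθ.symm _ _ ha) hb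

lemma congOfFilter_filterOfCong (hθ : IsSMMVCong τ θ) :
    congOfFilter (filterOfCong θ) = θ := by
  funext a b
  refine propext ⟨fun h => ?_, fun h => ?_⟩
  · have hF := hθ.isFilter_filterOfCong
    exact hθ.of_imp_mem_filterOfCong (hF.mem_of_mvle h (odot_mvle_left _ _))
      (hF.mem_of_mvle h (odot_mvle_right _ _))
  · have hd := hθ.odot_compat (hθ.imp_mem_filterOfCong h)
      (hθ.imp_mem_filterOfCong (hθ.symm _ _ h))
    rwa [odot_top] at hd

end IsSMMVCong

section UpClosure

variable {B : Type*} [MV B] {f : A → B} {F : Set A}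

def upClosure (f : A → B) (F : Set A) : Set B := {b | ∃ a ∈ F, mvle (f a) b}

lemma IsFilter.isFilter_upClosure (hf : IsMVHom f) (hF : IsFilter F) :
    IsFilter (upClosure f F) where
  top_mem := ⟨top, hF.top_mem, by rw [hf.map_top]; exact mvle_refl _⟩
  mp := by
    rintro a b ⟨c, hc, hca⟩ ⟨d, hd, hdab⟩
    refine ⟨odot d c, hF.odot_mem hd hc, ?_⟩
    rw [hf.map_odot]
    exact mvle_trans (odot_mvle_odot hdab hca) (odot_imp_mvle a b)

lemma IsTauFilter.isTauFilter_upClosure {τA : A → A} {τB : B → B} (hf : IsMVHom f)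
    (hτB : IsMVHom τB)
    (hτ : ∀ a, f (τA a) = τB (f a)) (hF : IsTauFilter τA F) :
    IsTauFilter τB (upClosure f F) := by
  refine ⟨hF.1.isFilter_upClosure hf, ?_⟩
  rintro b ⟨c, hc, hcb⟩
  exact ⟨τA c, hF.2 c hc, by rw [hτ]; exact hτB.mvle_map hcb⟩

lemma IsFilter.map_mem_upClosure_iff (hf : IsMVHom f) (hinj : Function.Injective f)
    (hF : IsFilter F) {a : A} : f a ∈ upClosure f F ↔ a ∈ F :=
  ⟨fun ⟨_, hc, hca⟩ => hF.mem_of_mvle hc ((hf.mvle_map_iff hinj).1 hca),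
    fun ha => ⟨a, ha, mvle_refl _⟩⟩

end UpClosure

end MV

open MV

/-- the variety of SMMV-algebras has the congruence extension
property: any congruence on a subalgebra `(A, τA)` of `(B, τB)` (the inclusion
being given by an embedding `f`) extends to a congruence of `(B, τB)` restricting
back to the original congruence. -/
theorem smmv_congruence_extension {A B : Type*} [MV A] [MV B]
    (τA : A → A) (τB : B → B) (hA : IsSMMV τA) (hB : IsSMMV τB)
    (f : A → B) (hf : IsMVHom f) (hinj : Function.Injective f)
    (hτ : ∀ a : A, f (τA a) = τB (f a))
    (θ : A → A → Prop) (hθ : IsSMMVCong τA θ) :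
    ∃ ψ : B → B → Prop, IsSMMVCong τB ψ ∧ ∀ a a' : A, ψ (f a) (f a') ↔ θ a a' := by
  have hF := hθ.isTauFilter_filterOfCong hA.1.map_top
  have hτB := hB.isMVHom
  refine ⟨congOfFilter (upClosure f (filterOfCong θ)),
    (hF.isTauFilter_upClosure hf hτB hτ).isSMMVCong_congOfFilter hτB, fun a a' => ?_⟩
  rw [congOfFilter, ← hf.map_mvdist, hF.1.map_mem_upClosure_iff hf hinj, ← congOfFilter,
    hθ.congOfFilter_filterOfCong]
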